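/- If X is a complete metric space and f : X → X is a continuous map admitting a collection of pairwise disjoint open sets {U_i} whose union is dense in X, together with f-invariant Borel probability measures μ_i with μ_i(X \ U_i) = 0 and μ_i restricted to U_i positive on every nonempty open subset of U_i, then each set U_i satisfies f(U_i ∩ X) ⊆ closure(U_i), i.e. the closure of each U_i is forward invariant under f. -/

import Mathlib

/-! The open set of points of `U` that `f` sends off `closure U` is contained in the preimage
of `(closure U)ᶜ`, which by invariance has the measure of `(closure U)ᶜ ⊆ Uᶜ`, namely zero;
local positivity on `U` forces it to be empty. -/

open MeasureTheory Set

theorem MeasureTheory.MeasurePreserving.image_subset_closure_of_locallyPositive {X : Type*}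
    [TopologicalSpace X] [MeasurableSpace X] [OpensMeasurableSpace X] {f : X → X}
    {μ : Measure X} {U : Set X} (hf : Continuous f) (hU : IsOpen U)
    (hinv : MeasurePreserving f μ μ) (hfull : μ Uᶜ = 0)
    (hpos : ∀ V : Set X, IsOpen V → V.Nonempty → V ⊆ U → 0 < μ V) :
    f '' U ⊆ closure U := by
  rintro _ ⟨x, hx, rfl⟩
  by_contra hfx
  have hWopen : IsOpen (closure U)ᶜ := isClosed_closure.isOpen_compl
  have hW : μ (closure U)ᶜ = 0 :=
    measure_mono_null (compl_subset_compl.2 subset_closure) hfull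
  have hV : μ (U ∩ f ⁻¹' (closure U)ᶜ) = 0 :=
    measure_mono_null inter_subset_right <| by
      rwa [hinv.measure_preimage hWopen.measurableSet.nullMeasurableSet]
  exact (hpos _ (hU.inter (hWopen.preimage hf)) ⟨x, hx, hfx⟩ inter_subset_left).ne' hV

theorem stmt0_general {X : Type*} [MetricSpace X] [MeasurableSpace X] [BorelSpace X]
    {ι : Type*} (f : X → X) (hf : Continuous f)
    (U : ι → Set X) (hUopen : ∀ i, IsOpen (U i))
    (μ : ι → Measure X)
    (hinv : ∀ i, MeasurePreserving f (μ i) (μ i))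
    (hfull : ∀ i, μ i (Set.univ \ U i) = 0)
    (hpos : ∀ i, ∀ V : Set X, IsOpen V → V.Nonempty → V ⊆ U i → 0 < μ i V) :
    ∀ i, f '' U i ⊆ closure (U i) := fun i =>
  (hinv i).image_subset_closure_of_locallyPositive hf (hUopen i)
    (by rw [compl_eq_univ_sdiff]; exact hfull i) (hpos i)

/-- If `X` is a complete metric space and `f : X → X` is a continuous map admitting a
collection of pairwise disjoint open sets `U i` whose union is dense, together with
`f`-invariant Borel probability measures `μ i` giving full measure to `U i` and locally
positive on `U i`, then the closure of each `U i` is forward invariant under `f`. -/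
theorem stmt0 {X : Type*} [MetricSpace X] [CompleteSpace X] [MeasurableSpace X] [BorelSpace X]
    {ι : Type*} (f : X → X) (hf : Continuous f)
    (U : ι → Set X) (hUopen : ∀ i, IsOpen (U i))
    (hUdisj : Pairwise (Function.onFun Disjoint U))
    (hUdense : Dense (⋃ i, U i))
    (μ : ι → Measure X)
    (hprob : ∀ i, IsProbabilityMeasure (μ i))
    (hinv : ∀ i, MeasurePreserving f (μ i) (μ i))
    (hfull : ∀ i, μ i (Set.univ \ U i) = 0)
    (hpos : ∀ i, ∀ V : Set X, IsOpen V → V.Nonempty → V ⊆ U i → 0 < μ i V) :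
    ∀ i, f '' U i ⊆ closure (U i) :=
  stmt0_general f hf U hUopen μ hinv hfull hpos
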